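/- (Corollary 5.3: horizontal and vertical 6-cycles are in different equivalence classes.) Let n ≥ 2, let 0 ≤ i ≤ n−3, and let σ, γ ∈ Equiv.Perm (Fin n). Suppose there exist words u, v over {0,…,n−2} with π(u) = σ, π(v) = γ, and u ++ c_i ++ reverse(u) ≈ v ++ c_i ++ reverse(v). Then σ⁻¹(n−1) ∈ {i, i+1, i+2} if and only if γ⁻¹(n−1) ∈ {i, i+1, i+2}; that is, the 6-cycle at σ is vertical if and only if the 6-cycle at γ is vertical. -/
import Mathlib


/-- The adjacent transposition `s_j = (j, j+1)` in the symmetric group on `Fin n`,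
indexed by `j : Fin (n-1)`. -/
def s {n : ℕ} (j : Fin (n - 1)) : Equiv.Perm (Fin n) :=
  Equiv.swap ⟨j.val, by have := j.isLt; omega⟩ ⟨j.val + 1, by have := j.isLt; omega⟩

/-- `π` sends a word `[j₁, …, j_r]` over the alphabet `{0, …, n-2}` to the product
`s_{j₁} ⋯ s_{j_r}`. -/
def π {n : ℕ} (w : List (Fin (n - 1))) : Equiv.Perm (Fin n) :=
  (w.map s).prod

/-- The two elementary moves on words: (T2) insertion of a square `[j, j]`, and
(T3) commutation of two letters `j, k` with `|j - k| ≥ 2`. -/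
inductive Move {n : ℕ} : List (Fin (n - 1)) → List (Fin (n - 1)) → Prop
  | t2 (u v : List (Fin (n - 1))) (j : Fin (n - 1)) :
      Move (u ++ v) (u ++ [j, j] ++ v)
  | t3 (u v : List (Fin (n - 1))) (j k : Fin (n - 1))
      (h : j.val + 2 ≤ k.val ∨ k.val + 2 ≤ j.val) :
      Move (u ++ [j, k] ++ v) (u ++ [k, j] ++ v)

/-- The equivalence `≈` on words: the reflexive–symmetric–transitive closure of the
moves (T2) and (T3). -/
def WEquiv {n : ℕ} : List (Fin (n - 1)) → List (Fin (n - 1)) → Prop :=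
  Relation.EqvGen Move

/-- The word `c_i = [i, i+1, i, i+1, i, i+1]` labelling a primitive 6-cycle of the
permutahedron graph, defined for `i + 3 ≤ n` (i.e. `0 ≤ i ≤ n-3`). -/
def cword {n : ℕ} (i : ℕ) (hi : i + 3 ≤ n) : List (Fin (n - 1)) :=
  [⟨i, by omega⟩, ⟨i + 1, by omega⟩, ⟨i, by omega⟩,
   ⟨i + 1, by omega⟩, ⟨i, by omega⟩, ⟨i + 1, by omega⟩]

/-- value-level description of `s j` -/
lemma s_val {n : ℕ} (j : Fin (n - 1)) (x : Fin n) :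
    ((s j x : Fin n)).val =
      if x.val = j.val then j.val + 1 else if x.val = j.val + 1 then j.val else x.val := by
  have hj := j.isLt
  unfold s
  rcases eq_or_ne x ⟨j.val, by omega⟩ with h1 | h1
  · rw [h1, Equiv.swap_apply_left]; simp [h1]
  rcases eq_or_ne x ⟨j.val + 1, by omega⟩ with h2 | h2
  · rw [h2, Equiv.swap_apply_right]
    simp [Fin.ext_iff] at h1 h2 ⊢
    try omega
  · rw [Equiv.swap_apply_of_ne_of_ne h1 h2]
    simp [Fin.ext_iff] at h1 h2
    simp [h1, h2]

/-- the crossing cocycle -/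
def cc {n : ℕ} (j : Fin (n - 1)) (x : Fin n) : ZMod 2 :=
  if j.val + 2 ≤ x.val then 1 else 0

def f {n : ℕ} : List (Fin (n - 1)) → Fin n → ZMod 2
  | [], _ => 0
  | j :: w, x => f w x + cc j (π w x)

lemma π_nil {n : ℕ} : π ([] : List (Fin (n - 1))) = 1 := rfl

lemma π_cons {n : ℕ} (j : Fin (n - 1)) (w : List (Fin (n - 1))) :
    π (j :: w) = s j * π w := by simp [π]

lemma π_append {n : ℕ} (w₁ w₂ : List (Fin (n - 1))) :
    π (w₁ ++ w₂) = π w₁ * π w₂ := by simp [π]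

lemma f_append {n : ℕ} (w₁ w₂ : List (Fin (n - 1))) (x : Fin n) :
    f (w₁ ++ w₂) x = f w₂ x + f w₁ (π w₂ x) := by
  induction w₁ with
  | nil => simp [f]
  | cons j t ih =>
      show f (t ++ w₂) x + cc j (π (t ++ w₂) x) = _
      rw [ih, π_append]
      show _ = f w₂ x + (f t (π w₂ x) + cc j (π t (π w₂ x)))
      rw [Equiv.Perm.mul_apply]
      ring

lemma cc_s {n : ℕ} (j k : Fin (n - 1)) (x : Fin n) (h : k.val ≠ j.val + 1) :
    cc j (s k x) = cc j x := by
  unfold cc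
  simp only [s_val]
  split_ifs <;> first | rfl | omega

lemma s_mul_self {n : ℕ} (j : Fin (n - 1)) : s (n := n) j * s j = 1 :=
  Equiv.swap_mul_self _ _

lemma s_comm' {n : ℕ} (j k : Fin (n - 1)) (h : j.val + 2 ≤ k.val ∨ k.val + 2 ≤ j.val) :
    s (n := n) j * s k = s k * s j := by
  ext x
  rw [Equiv.Perm.mul_apply, Equiv.Perm.mul_apply]
  simp only [s_val]
  split_ifs <;> omega

lemma move_π {n : ℕ} {w w' : List (Fin (n - 1))} (h : Move w w') : π w = π w' := by
  cases h with
  | t2 u v j =>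
      simp [π_append, π_cons, π_nil, ← mul_assoc, mul_assoc (π u), s_mul_self]
  | t3 u v j k hjk =>
      have hc := s_comm' (n := n) j k hjk
      simp only [π_append, π_cons, π_nil, mul_one]
      rw [hc]

lemma f_move {n : ℕ} {w w' : List (Fin (n - 1))} (h : Move w w') (x : Fin n) :
    f w x = f w' x := by
  cases h with
  | t2 u v j =>
      rw [f_append, f_append, f_append]
      have hjj : π ([j, j] : List (Fin (n - 1))) = 1 := by
        simp [π_cons, π_nil, s_mul_self]
      have hfjj : ∀ y : Fin n, f ([j, j] : List (Fin (n - 1))) y = 0 := by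
        intro y
        show f [j] y + cc j (π [j] y) = 0
        show (f ([] : List (Fin (n-1))) y + cc j (π ([] : List (Fin (n-1))) y)) + _ = 0
        rw [π_nil, π_cons, π_nil, mul_one]
        show (0 + cc j y) + cc j (s j y) = 0
        rw [cc_s j j y (by omega), zero_add]
        unfold cc
        split_ifs <;> decide
      rw [hjj, hfjj, zero_add, Equiv.Perm.one_apply]
  | t3 u v j k hjk =>
      rw [f_append, f_append, f_append, f_append]
      have h1 : π ([j, k] : List (Fin (n - 1))) = π [k, j] := by
        simp only [π_cons, π_nil, mul_one]; exact s_comm' j k hjk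
      have h2 : ∀ y : Fin n, f ([j, k] : List (Fin (n - 1))) y = f [k, j] y := by
        intro y
        show (f ([] : List (Fin (n-1))) y + cc k (π ([] : List (Fin (n-1))) y)) + cc j (π [k] y)
          = (f ([] : List (Fin (n-1))) y + cc j (π ([] : List (Fin (n-1))) y)) + cc k (π [j] y)
        rw [π_nil, π_cons, π_nil, mul_one, π_cons, π_nil, mul_one]
        show (0 + cc k y) + cc j (s k y) = (0 + cc j y) + cc k (s j y)
        rw [cc_s j k y (by omega), cc_s k j y (by omega)]
        ring
      rw [h1, h2]

lemma wequiv_invariant {n : ℕ} {w w' : List (Fin (n - 1))}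
    (h : Relation.EqvGen Move w w') : π w = π w' ∧ ∀ x : Fin n, f w x = f w' x := by
  induction h with
  | rel a b hab => exact ⟨move_π hab, f_move hab⟩
  | refl a => exact ⟨rfl, fun _ => rfl⟩
  | symm a b _ ih => exact ⟨ih.1.symm, fun x => (ih.2 x).symm⟩
  | trans a b c _ _ ih1 ih2 => exact ⟨ih1.1.trans ih2.1, fun x => (ih1.2 x).trans (ih2.2 x)⟩

lemma wrev {n : ℕ} (w : List (Fin (n - 1))) :
    π (w ++ w.reverse) = 1 ∧ ∀ x : Fin n, f (w ++ w.reverse) x = 0 := by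
  induction w with
  | nil => exact ⟨rfl, fun _ => rfl⟩
  | cons j t ih =>
      have hre : (j :: t).reverse = t.reverse ++ [j] := by simp
      have heq : (j :: t) ++ (j :: t).reverse = [j] ++ ((t ++ t.reverse) ++ [j]) := by
        rw [hre]; simp
      have hπj : π ([j] : List (Fin (n-1))) = s j := by
        rw [π_cons, π_nil, mul_one]
      have h1 : ∀ y : Fin n, f ([j] : List (Fin (n-1))) y = cc j y := by
        intro y
        show f ([] : List (Fin (n-1))) y + cc j (π ([] : List (Fin (n-1))) y) = _
        rw [π_nil]; show 0 + cc j y = cc j y; rw [zero_add]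
      constructor
      · rw [heq, π_append, π_append, ih.1, one_mul, hπj, s_mul_self]
      · intro x
        rw [heq, f_append, f_append, π_append, ih.1, one_mul, hπj, h1, h1, ih.2,
          add_zero, cc_s j j x (by omega)]
        unfold cc
        split_ifs <;> decide

lemma π_rev {n : ℕ} (w : List (Fin (n - 1))) : π (n := n) w.reverse = (π w)⁻¹ := by
  have h := (wrev w).1
  rw [π_append] at h
  exact eq_inv_of_mul_eq_one_right h

lemma f_rev {n : ℕ} (w : List (Fin (n - 1))) (x : Fin n) :
    f w.reverse x = f w ((π w)⁻¹ x) := by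
  have h := (wrev w).2 x
  rw [f_append, π_rev] at h
  have h2 : f w.reverse x + f w ((π w)⁻¹ x) + f w ((π w)⁻¹ x) = f w ((π w)⁻¹ x) := by
    rw [h, zero_add]
  rwa [add_assoc, CharTwo.add_self_eq_zero, add_zero] at h2


set_option maxHeartbeats 2000000 in
lemma f_cword {n : ℕ} (i : ℕ) (hi : i + 3 ≤ n) (y : Fin n) :
    f (cword i hi) y = if y.val = i ∨ y.val = i + 1 ∨ y.val = i + 2 then 1 else 0 := by
  simp only [cword, f, π_cons, π_nil, mul_one, Equiv.Perm.mul_apply, Equiv.Perm.one_apply,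
    zero_add]
  rcases (show y.val = i ∨ y.val = i + 1 ∨ y.val = i + 2 ∨ (y.val < i ∨ i + 3 ≤ y.val) by
    omega) with hy | hy | hy | hy
  · rw [if_pos (show (y.val = i ∨ y.val = i + 1 ∨ y.val = i + 2) by omega)]
    have e1 : (((s (n := n) ⟨i+1, by omega⟩) y)).val = i := by
      rw [s_val]; simp only [Fin.val_mk, hy]; split_ifs <;> omega
    have e2 : (((s (n := n) ⟨i, by omega⟩) ((s ⟨i+1, by omega⟩) y))).val = i + 1 := by
      rw [s_val]; simp only [Fin.val_mk, e1]; split_ifs <;> omega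
    have e3 : (((s (n := n) ⟨i+1, by omega⟩) ((s ⟨i, by omega⟩) ((s ⟨i+1, by omega⟩) y)))).val = i + 2 := by
      rw [s_val]; simp only [Fin.val_mk, e2]; split_ifs <;> omega
    have e4 : (((s (n := n) ⟨i, by omega⟩) ((s ⟨i+1, by omega⟩) ((s ⟨i, by omega⟩) ((s ⟨i+1, by omega⟩) y))))).val = i + 2 := by
      rw [s_val]; simp only [Fin.val_mk, e3]; split_ifs <;> omega
    have e5 : (((s (n := n) ⟨i+1, by omega⟩) ((s ⟨i, by omega⟩) ((s ⟨i+1, by omega⟩) ((s ⟨i, by omega⟩) ((s ⟨i+1, by omega⟩) y)))))).val = i + 1 := by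
      rw [s_val]; simp only [Fin.val_mk, e4]; split_ifs <;> omega
    simp only [cc, Fin.val_mk, e1, e2, e3, e4, e5, hy]
    rw [if_neg (show ¬(i+1+2 ≤ i) by omega),
      if_neg (show ¬(i+2 ≤ i) by omega),
      if_neg (show ¬(i+1+2 ≤ i+1) by omega),
      if_pos (show i+2 ≤ i+2 by omega),
      if_neg (show ¬(i+1+2 ≤ i+2) by omega),
      if_neg (show ¬(i+2 ≤ i+1) by omega)]
    decide
  · rw [if_pos (show (y.val = i ∨ y.val = i + 1 ∨ y.val = i + 2) by omega)]
    have e1 : (((s (n := n) ⟨i+1, by omega⟩) y)).val = i + 2 := by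
      rw [s_val]; simp only [Fin.val_mk, hy]; split_ifs <;> omega
    have e2 : (((s (n := n) ⟨i, by omega⟩) ((s ⟨i+1, by omega⟩) y))).val = i + 2 := by
      rw [s_val]; simp only [Fin.val_mk, e1]; split_ifs <;> omega
    have e3 : (((s (n := n) ⟨i+1, by omega⟩) ((s ⟨i, by omega⟩) ((s ⟨i+1, by omega⟩) y)))).val = i + 1 := by
      rw [s_val]; simp only [Fin.val_mk, e2]; split_ifs <;> omega
    have e4 : (((s (n := n) ⟨i, by omega⟩) ((s ⟨i+1, by omega⟩) ((s ⟨i, by omega⟩) ((s ⟨i+1, by omega⟩) y))))).val = i := by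
      rw [s_val]; simp only [Fin.val_mk, e3]; split_ifs <;> omega
    have e5 : (((s (n := n) ⟨i+1, by omega⟩) ((s ⟨i, by omega⟩) ((s ⟨i+1, by omega⟩) ((s ⟨i, by omega⟩) ((s ⟨i+1, by omega⟩) y)))))).val = i := by
      rw [s_val]; simp only [Fin.val_mk, e4]; split_ifs <;> omega
    simp only [cc, Fin.val_mk, e1, e2, e3, e4, e5, hy]
    rw [if_neg (show ¬(i+1+2 ≤ i+1) by omega),
      if_pos (show i+2 ≤ i+2 by omega),
      if_neg (show ¬(i+1+2 ≤ i+2) by omega),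
      if_neg (show ¬(i+2 ≤ i+1) by omega),
      if_neg (show ¬(i+1+2 ≤ i) by omega),
      if_neg (show ¬(i+2 ≤ i) by omega)]
    decide
  · rw [if_pos (show (y.val = i ∨ y.val = i + 1 ∨ y.val = i + 2) by omega)]
    have e1 : (((s (n := n) ⟨i+1, by omega⟩) y)).val = i + 1 := by
      rw [s_val]; simp only [Fin.val_mk, hy]; split_ifs <;> omega
    have e2 : (((s (n := n) ⟨i, by omega⟩) ((s ⟨i+1, by omega⟩) y))).val = i := by
      rw [s_val]; simp only [Fin.val_mk, e1]; split_ifs <;> omega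
    have e3 : (((s (n := n) ⟨i+1, by omega⟩) ((s ⟨i, by omega⟩) ((s ⟨i+1, by omega⟩) y)))).val = i := by
      rw [s_val]; simp only [Fin.val_mk, e2]; split_ifs <;> omega
    have e4 : (((s (n := n) ⟨i, by omega⟩) ((s ⟨i+1, by omega⟩) ((s ⟨i, by omega⟩) ((s ⟨i+1, by omega⟩) y))))).val = i + 1 := by
      rw [s_val]; simp only [Fin.val_mk, e3]; split_ifs <;> omega
    have e5 : (((s (n := n) ⟨i+1, by omega⟩) ((s ⟨i, by omega⟩) ((s ⟨i+1, by omega⟩) ((s ⟨i, by omega⟩) ((s ⟨i+1, by omega⟩) y)))))).val = i + 2 := by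
      rw [s_val]; simp only [Fin.val_mk, e4]; split_ifs <;> omega
    simp only [cc, Fin.val_mk, e1, e2, e3, e4, e5, hy]
    rw [if_neg (show ¬(i+1+2 ≤ i+2) by omega),
      if_neg (show ¬(i+2 ≤ i+1) by omega),
      if_neg (show ¬(i+1+2 ≤ i) by omega),
      if_neg (show ¬(i+2 ≤ i) by omega),
      if_neg (show ¬(i+1+2 ≤ i+1) by omega),
      if_pos (show i+2 ≤ i+2 by omega)]
    decide
  · have e1 : (((s (n := n) ⟨i+1, by omega⟩) y)).val = y.val := by
      rw [s_val]; simp only [Fin.val_mk]; split_ifs <;> omega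
    have e2 : (((s (n := n) ⟨i, by omega⟩) ((s ⟨i+1, by omega⟩) y))).val = y.val := by
      rw [s_val]; simp only [Fin.val_mk, e1]; split_ifs <;> omega
    have e3 : (((s (n := n) ⟨i+1, by omega⟩) ((s ⟨i, by omega⟩) ((s ⟨i+1, by omega⟩) y)))).val = y.val := by
      rw [s_val]; simp only [Fin.val_mk, e2]; split_ifs <;> omega
    have e4 : (((s (n := n) ⟨i, by omega⟩) ((s ⟨i+1, by omega⟩) ((s ⟨i, by omega⟩) ((s ⟨i+1, by omega⟩) y))))).val = y.val := by
      rw [s_val]; simp only [Fin.val_mk, e3]; split_ifs <;> omega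
    have e5 : (((s (n := n) ⟨i+1, by omega⟩) ((s ⟨i, by omega⟩) ((s ⟨i+1, by omega⟩) ((s ⟨i, by omega⟩) ((s ⟨i+1, by omega⟩) y)))))).val = y.val := by
      rw [s_val]; simp only [Fin.val_mk, e4]; split_ifs <;> omega
    simp only [cc, Fin.val_mk, e1, e2, e3, e4, e5]
    rcases hy with hy | hy
    · rw [if_neg (show ¬(i+1+2 ≤ y.val) by omega), if_neg (show ¬(i+2 ≤ y.val) by omega),
        if_neg (show ¬(y.val = i ∨ y.val = i + 1 ∨ y.val = i + 2) by omega)]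
      decide
    · rw [if_pos (show i+1+2 ≤ y.val by omega), if_pos (show i+2 ≤ y.val by omega),
        if_neg (show ¬(y.val = i ∨ y.val = i + 1 ∨ y.val = i + 2) by omega)]
      decide

lemma π_cword {n : ℕ} (i : ℕ) (hi : i + 3 ≤ n) : π (cword i hi) = 1 := by
  have hi' : i + 2 < n := by omega
  set a : Fin n := ⟨i, by omega⟩ with ha
  set b : Fin n := ⟨i + 1, by omega⟩ with hb
  set c : Fin n := ⟨i + 2, by omega⟩ with hc
  have hσ : s (n := n) (⟨i, by omega⟩ : Fin (n - 1)) = Equiv.swap a b := rfl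
  have hτ : s (n := n) (⟨i + 1, by omega⟩ : Fin (n - 1)) = Equiv.swap b c := rfl
  have hab : a ≠ b := by simp [ha, hb, Fin.ext_iff]
  have hac : a ≠ c := by simp [ha, hc, Fin.ext_iff]
  have hbc : b ≠ c := by simp [hb, hc, Fin.ext_iff]
  have h1 : Equiv.swap a b * Equiv.swap b c * Equiv.swap a b = Equiv.swap a c := by
    have := Equiv.swap_apply_apply (Equiv.swap a b) b c
    rw [Equiv.swap_apply_right, Equiv.swap_apply_of_ne_of_ne hac.symm hbc.symm,
      Equiv.swap_inv]
      at this
    exact this.symm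
  have h2 : Equiv.swap b c * Equiv.swap a b * Equiv.swap b c = Equiv.swap a c := by
    have := Equiv.swap_apply_apply (Equiv.swap b c) a b
    rw [Equiv.swap_apply_left, Equiv.swap_apply_of_ne_of_ne hab hac, Equiv.swap_inv] at this
    exact this.symm
  show (s ⟨i, _⟩) * ((s ⟨i + 1, _⟩) * ((s ⟨i, _⟩) * ((s ⟨i + 1, _⟩) * ((s ⟨i, _⟩) * ((s ⟨i + 1, _⟩) * 1))))) = 1
  rw [hσ, hτ, mul_one]
  calc Equiv.swap a b * (Equiv.swap b c * (Equiv.swap a b * (Equiv.swap b c *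
        (Equiv.swap a b * Equiv.swap b c))))
      = (Equiv.swap a b * Equiv.swap b c * Equiv.swap a b) *
        (Equiv.swap b c * Equiv.swap a b * Equiv.swap b c) := by
        simp only [mul_assoc]
    _ = 1 := by rw [h1, h2, Equiv.swap_mul_self]

lemma key {n : ℕ} (i : ℕ) (hi : i + 3 ≤ n) (w : List (Fin (n - 1))) (x : Fin n) :
    f (w ++ cword i hi ++ w.reverse) x = f (cword i hi) ((π w)⁻¹ x) := by
  rw [f_append, f_append, π_rev, f_rev, π_cword, Equiv.Perm.one_apply]
  have h0 := CharTwo.add_self_eq_zero (f w ((π w)⁻¹ x))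
  calc f w ((π w)⁻¹ x) + (f (cword i hi) ((π w)⁻¹ x) + f w ((π w)⁻¹ x))
      = f (cword i hi) ((π w)⁻¹ x) + (f w ((π w)⁻¹ x) + f w ((π w)⁻¹ x)) := by ring
    _ = f (cword i hi) ((π w)⁻¹ x) := by rw [h0, add_zero]

/-- Corollary 5.3: if the primitive 6-cycles based at `σ` and at `γ` with
transpositions `s_i, s_{i+1}` are G-homotopic, then the 6-cycle at `σ` is vertical
(i.e. `σ⁻¹(n-1) ∈ {i, i+1, i+2}`) iff the 6-cycle at `γ` is vertical. -/
theorem vertical_iff_vertical_of_wequiv {n : ℕ} (hn : 2 ≤ n) (i : ℕ) (hi : i + 3 ≤ n)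
    (σ γ : Equiv.Perm (Fin n)) (u v : List (Fin (n - 1)))
    (hu : π u = σ) (hv : π v = γ)
    (h : WEquiv (u ++ cword i hi ++ u.reverse) (v ++ cword i hi ++ v.reverse)) :
    ((σ⁻¹ ⟨n - 1, by omega⟩ : Fin n).val ∈ ({i, i + 1, i + 2} : Set ℕ) ↔
      (γ⁻¹ ⟨n - 1, by omega⟩ : Fin n).val ∈ ({i, i + 1, i + 2} : Set ℕ)) := by
  have h' : Relation.EqvGen Move (u ++ cword i hi ++ u.reverse)
      (v ++ cword i hi ++ v.reverse) := h
  have hfx := (wequiv_invariant h').2 ⟨n - 1, by omega⟩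
  rw [key i hi u _, key i hi v _, hu, hv, f_cword, f_cword] at hfx
  have hiff : ((σ⁻¹ ⟨n - 1, by omega⟩ : Fin n).val = i ∨
      (σ⁻¹ ⟨n - 1, by omega⟩ : Fin n).val = i + 1 ∨
      (σ⁻¹ ⟨n - 1, by omega⟩ : Fin n).val = i + 2) ↔
      ((γ⁻¹ ⟨n - 1, by omega⟩ : Fin n).val = i ∨
      (γ⁻¹ ⟨n - 1, by omega⟩ : Fin n).val = i + 1 ∨
      (γ⁻¹ ⟨n - 1, by omega⟩ : Fin n).val = i + 2) := by
    constructor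
    · intro hp
      by_contra hq
      rw [if_pos hp, if_neg hq] at hfx
      exact absurd hfx (by decide)
    · intro hp
      by_contra hq
      rw [if_neg hq, if_pos hp] at hfx
      exact absurd hfx (by decide)
  simpa [Set.mem_insert_iff, Set.mem_singleton_iff] using hiff
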